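/- The Smith–Kidger Type 1 space together with the 14 point-evaluation functionals at the eight vertices (±1,±1,±1) and six face-centroids (±1,0,0),(0,±1,0),(0,0,±1) of [−1,1]³ is unisolvent: any polynomial in the Type 1 space vanishing at all 14 points is identically zero. -/

import Mathlib

open MvPolynomial

noncomputable def SK1 : Submodule ℝ (MvPolynomial (Fin 3) ℝ) :=
  MvPolynomial.restrictTotalDegree (Fin 3) ℝ 2 ⊔
    Submodule.span ℝ {X 0 * X 1 * X 2, X 0 ^ 2 * X 1, X 1 ^ 2 * X 2, X 2 ^ 2 * X 0}

/-!
Write `p = a + Σ bᵢ xᵢ + Σ cᵢ xᵢ² + d₀ x₁x₂ + d₁ x₀x₂ + d₂ x₀x₁`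
`+ e x₀x₁x₂ + f x₀²x₁ + g x₁²x₂ + h x₂²x₀`.
Every cubic term vanishes at the face centres `±eᵢ`, so the face conditions read
`a ± bᵢ + cᵢ = 0`, i.e. `bᵢ = 0` and `cᵢ = -a`. On the vertices `xᵢ² = 1`, so `p` restricts to the
multilinear function `-2a + h x₀ + f x₁ + g x₂ + d₂ x₀x₁ + d₁ x₀x₂ + d₀ x₁x₂ + e x₀x₁x₂` on `{±1}³`;
the eight characters of `{±1}³` are linearly independent, so all its coefficients vanish.
-/

section
variable {R : Type*} [CommSemiring R]

lemma monomial_one_fin_three (v : Fin 3 →₀ ℕ) :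
    (monomial v 1 : MvPolynomial (Fin 3) R) = X 0 ^ v 0 * X 1 ^ v 1 * X 2 ^ v 2 := by
  rw [monomial_eq, C_1, one_mul, Finsupp.prod_fintype _ _ (fun _ => pow_zero _),
    Fin.prod_univ_three]

variable (R) in
lemma restrictTotalDegree_two_le_span :
    restrictTotalDegree (Fin 3) R 2 ≤ Submodule.span R
      {1, X 0, X 1, X 2, X 0 ^ 2, X 1 ^ 2, X 2 ^ 2, X 1 * X 2, X 0 * X 2, X 0 * X 1} := by
  rw [restrictTotalDegree, restrictSupport_eq_span]
  refine Submodule.span_mono ?_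
  rintro _ ⟨v, hv, rfl⟩
  dsimp only
  have hv : v 0 + v 1 + v 2 ≤ 2 := by
    simpa [Finsupp.sum_fintype, Fin.sum_univ_three] using hv
  rw [monomial_one_fin_three]
  have h₀ : v 0 ≤ 2 := by omega
  have h₁ : v 1 ≤ 2 := by omega
  have h₂ : v 2 ≤ 2 := by omega
  interval_cases v 0 <;> interval_cases v 1 <;> interval_cases v 2 <;> simp_all

end

lemma SK1_le_span : SK1 ≤ Submodule.span ℝ
    ({1, X 0, X 1, X 2, X 0 ^ 2, X 1 ^ 2, X 2 ^ 2, X 1 * X 2, X 0 * X 2, X 0 * X 1} ∪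
      {X 0 * X 1 * X 2, X 0 ^ 2 * X 1, X 1 ^ 2 * X 2, X 2 ^ 2 * X 0}) :=
  sup_le ((restrictTotalDegree_two_le_span ℝ).trans (Submodule.span_mono Set.subset_union_left))
    (Submodule.span_mono Set.subset_union_right)

lemma exists_eq_of_mem_SK1 {p : MvPolynomial (Fin 3) ℝ} (hp : p ∈ SK1) :
    ∃ a b₀ b₁ b₂ c₀ c₁ c₂ d₀ d₁ d₂ e f g h : ℝ, p =
      C a + C b₀ * X 0 + C b₁ * X 1 + C b₂ * X 2 + C c₀ * X 0 ^ 2 + C c₁ * X 1 ^ 2 +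
        C c₂ * X 2 ^ 2 + C d₀ * (X 1 * X 2) + C d₁ * (X 0 * X 2) + C d₂ * (X 0 * X 1) +
        C e * (X 0 * X 1 * X 2) + C f * (X 0 ^ 2 * X 1) + C g * (X 1 ^ 2 * X 2) +
        C h * (X 2 ^ 2 * X 0) := by
  have hp := SK1_le_span hp
  simp only [Set.insert_union, Set.singleton_union, Submodule.mem_span_insert,
    Submodule.mem_span_singleton] at hp
  obtain ⟨a, _, ⟨b₀, _, ⟨b₁, _, ⟨b₂, _, ⟨c₀, _, ⟨c₁, _, ⟨c₂, _, ⟨d₀, _, ⟨d₁, _, ⟨d₂, _,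
    ⟨e, _, ⟨f, _, ⟨g, _, ⟨h, rfl⟩, rfl⟩, rfl⟩, rfl⟩, rfl⟩, rfl⟩, rfl⟩, rfl⟩, rfl⟩, rfl⟩,
    rfl⟩, rfl⟩, rfl⟩, rfl⟩ := hp
  refine ⟨a, b₀, b₁, b₂, c₀, c₁, c₂, d₀, d₁, d₂, e, f, g, h, ?_⟩
  simp only [smul_eq_C_mul, mul_one]
  ring

lemma multilinear_coeffs_eq_zero_of_forall_cube {K : Type*} [Field K] [CharZero K]
    {c c₀ c₁ c₂ c₀₁ c₀₂ c₁₂ c₀₁₂ : K}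
    (h : ∀ x y z : K, (x = 1 ∨ x = -1) → (y = 1 ∨ y = -1) → (z = 1 ∨ z = -1) →
      c + c₀ * x + c₁ * y + c₂ * z + c₀₁ * x * y + c₀₂ * x * z + c₁₂ * y * z +
        c₀₁₂ * x * y * z = 0) :
    c = 0 ∧ c₀ = 0 ∧ c₁ = 0 ∧ c₂ = 0 ∧ c₀₁ = 0 ∧ c₀₂ = 0 ∧ c₁₂ = 0 ∧ c₀₁₂ = 0 := by
  have h₁ := h 1 1 1 (.inl rfl) (.inl rfl) (.inl rfl)
  have h₂ := h 1 1 (-1) (.inl rfl) (.inl rfl) (.inr rfl)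
  have h₃ := h 1 (-1) 1 (.inl rfl) (.inr rfl) (.inl rfl)
  have h₄ := h 1 (-1) (-1) (.inl rfl) (.inr rfl) (.inr rfl)
  have h₅ := h (-1) 1 1 (.inr rfl) (.inl rfl) (.inl rfl)
  have h₆ := h (-1) 1 (-1) (.inr rfl) (.inl rfl) (.inr rfl)
  have h₇ := h (-1) (-1) 1 (.inr rfl) (.inr rfl) (.inl rfl)
  have h₈ := h (-1) (-1) (-1) (.inr rfl) (.inr rfl) (.inr rfl)
  -- Walsh–Hadamard inversion: each coefficient is the mean of the values weighted by its character.
  refine ⟨?_, ?_, ?_, ?_, ?_, ?_, ?_, ?_⟩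
  · linear_combination (h₁ + h₂ + h₃ + h₄ + h₅ + h₆ + h₇ + h₈) / 8
  · linear_combination (h₁ + h₂ + h₃ + h₄ - h₅ - h₆ - h₇ - h₈) / 8
  · linear_combination (h₁ + h₂ - h₃ - h₄ + h₅ + h₆ - h₇ - h₈) / 8
  · linear_combination (h₁ - h₂ + h₃ - h₄ + h₅ - h₆ + h₇ - h₈) / 8
  · linear_combination (h₁ + h₂ - h₃ - h₄ - h₅ - h₆ + h₇ + h₈) / 8
  · linear_combination (h₁ - h₂ + h₃ - h₄ - h₅ + h₆ - h₇ + h₈) / 8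
  · linear_combination (h₁ - h₂ - h₃ + h₄ + h₅ - h₆ - h₇ + h₈) / 8
  · linear_combination (h₁ - h₂ - h₃ + h₄ - h₅ + h₆ + h₇ - h₈) / 8

theorem stmt7 (p : MvPolynomial (Fin 3) ℝ) (hp : p ∈ SK1)
    (hV : ∀ j k l : ℝ, (j = 1 ∨ j = -1) → (k = 1 ∨ k = -1) → (l = 1 ∨ l = -1) →
      eval ![j, k, l] p = 0)
    (hM : ∀ s : ℝ, (s = 1 ∨ s = -1) →
      eval ![s, 0, 0] p = 0 ∧ eval ![0, s, 0] p = 0 ∧ eval ![0, 0, s] p = 0) :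
    p = 0 := by
  obtain ⟨a, b₀, b₁, b₂, c₀, c₁, c₂, d₀, d₁, d₂, e, f, g, h, rfl⟩ := exists_eq_of_mem_SK1 hp
  simp only [eval_add, eval_mul, eval_pow, eval_C, eval_X, Matrix.cons_val_zero,
    Matrix.cons_val_one, Matrix.cons_val_two, Matrix.head_cons, Matrix.tail_cons] at hV hM
  obtain ⟨hx₁, hy₁, hz₁⟩ := hM 1 (.inl rfl)
  obtain ⟨hx₂, hy₂, hz₂⟩ := hM (-1) (.inr rfl)
  obtain rfl : b₀ = 0 := by linarith
  obtain rfl : b₁ = 0 := by linarith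
  obtain rfl : b₂ = 0 := by linarith
  obtain rfl : c₀ = -a := by linarith
  obtain rfl : c₁ = -a := by linarith
  obtain rfl : c₂ = -a := by linarith
  obtain ⟨ha, rfl, rfl, rfl, rfl, rfl, rfl, rfl⟩ := multilinear_coeffs_eq_zero_of_forall_cube
    (c := -2 * a) (c₀ := h) (c₁ := f) (c₂ := g) (c₀₁ := d₂) (c₀₂ := d₁) (c₁₂ := d₀) (c₀₁₂ := e)
    fun x y z hx hy hz => by
      linear_combination hV x y z hx hy hz + (a - f * y) * sq_eq_one_iff.mpr hx +
        (a - g * z) * sq_eq_one_iff.mpr hy +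
        (a - h * x) * sq_eq_one_iff.mpr hz
  obtain rfl : a = 0 := by linarith
  simp
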